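/- Let A be a central simple algebra of degree three over F and μ ∈ A^×. Then the adjoint identity (x^♯)^♯ = N(x)x holds for all x ∈ J(A,μ) if and only if μ ∈ F^×·1. -/
import Mathlib


/-- A separable associative algebra of degree three over `F`:
an associative unital `F`-algebra `A` equipped with a cubic norm `NA`,
directional derivative `Ndir x y = N_A(x;y)` (the coefficient of `Z` in
`N_A(x+Zy)`), trace `TA`, quadratic form `SA`, adjoint `sharp` and bilinear
trace `Tbil`, satisfying the degree-3 identity, the trace-sharp formula and
the trace-product formula. -/
structure DegreeThreeAlg (F A : Type*) [Field F] [Ring A] [Algebra F A] where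
  NA : A → F
  Ndir : A → A → F
  TA : A → F
  SA : A → F
  sharp : A → A
  Tbil : A → A → F
  NA_one : NA 1 = 1
  NA_smul : ∀ (c : F) (x : A), NA (c • x) = c ^ 3 * NA x
  Ndir_expand : ∀ (x y : A) (z : F),
    NA (x + z • y) = NA x + z * Ndir x y + z ^ 2 * Ndir y x + z ^ 3 * NA y
  Ndir_add_right : ∀ x y z : A, Ndir x (y + z) = Ndir x y + Ndir x z
  Ndir_smul_right : ∀ (x : A) (c : F) (y : A), Ndir x (c • y) = c * Ndir x y
  TA_def : ∀ x : A, TA x = Ndir 1 x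
  SA_def : ∀ x : A, SA x = Ndir x 1
  sharp_def : ∀ x : A, sharp x = x ^ 2 - TA x • x + SA x • (1 : A)
  Tbil_def : ∀ x y : A,
    Tbil x y = TA x * TA y - (Ndir (1 + y) x - Ndir 1 x - Ndir y x)
  degree3 : ∀ x : A, x ^ 3 - TA x • x ^ 2 + SA x • x - NA x • (1 : A) = 0
  trace_sharp : ∀ x y : A, Tbil (sharp x) y = Ndir x y
  trace_product : ∀ x y : A, Tbil x y = TA (x * y)

variable {F A : Type*} [Field F] [Ring A] [Algebra F A]

/-- Conjugation `x̄ = ½(T_A(x)·1 − x)` in `A`. -/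
noncomputable def bar (D : DegreeThreeAlg F A) (x : A) : A :=
  (2 : F)⁻¹ • (D.TA x • (1 : A) - x)

/-- Linearization of the adjoint in `A`: `x ♯ y = (x+y)^♯ − x^♯ − y^♯`. -/
noncomputable def sharpBil (D : DegreeThreeAlg F A) (x y : A) : A :=
  D.sharp (x + y) - D.sharp x - D.sharp y

/-- `x × y = ½ (x ♯ y)` in `A`. -/
noncomputable def cross (D : DegreeThreeAlg F A) (x y : A) : A :=
  (2 : F)⁻¹ • sharpBil D x y

/-- Multiplication of the generalized first Tits construction `J(A,μ)` on `A ⊕ A ⊕ A`. -/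
noncomputable def Jmul (D : DegreeThreeAlg F A) (μ : Aˣ) (x y : A × A × A) : A × A × A :=
  ((2 : F)⁻¹ • (x.1 * y.1 + y.1 * x.1) + bar D (x.2.1 * y.2.2) + bar D (y.2.1 * x.2.2),
   bar D x.1 * y.2.1 + bar D y.1 * x.2.1 + (↑μ⁻¹ : A) * cross D x.2.2 y.2.2,
   x.2.2 * bar D y.1 + y.2.2 * bar D x.1 + (↑μ : A) * cross D x.2.1 y.2.1)

/-- Adjoint on `J(A,μ)`. -/
noncomputable def Jsharp (D : DegreeThreeAlg F A) (μ : Aˣ) (x : A × A × A) : A × A × A :=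
  (D.sharp x.1 - x.2.1 * x.2.2,
   (↑μ⁻¹ : A) * D.sharp x.2.2 - x.1 * x.2.1,
   (↑μ : A) * D.sharp x.2.1 - x.2.2 * x.1)

/-- Sharp map on `J(A,μ)`: linearization of the adjoint. -/
noncomputable def JsharpBil (D : DegreeThreeAlg F A) (μ : Aˣ) (x y : A × A × A) : A × A × A :=
  Jsharp D μ (x + y) - Jsharp D μ x - Jsharp D μ y

/-- Generalized trace on `J(A,μ)`. -/
def JT (D : DegreeThreeAlg F A) (x : A × A × A) : F := D.TA x.1

/-- Generalized bilinear trace on `J(A,μ)`. -/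
def JTbil (D : DegreeThreeAlg F A) (x y : A × A × A) : F :=
  D.TA (x.1 * y.1) + D.TA (x.2.1 * y.2.2) + D.TA (x.2.2 * y.2.1)

/-- Generalized cubic norm `N : J(A,μ) → A`. -/
noncomputable def JN (D : DegreeThreeAlg F A) (μ : Aˣ) (x : A × A × A) : A :=
  D.NA x.1 • (1 : A) + D.NA x.2.1 • (↑μ : A) + D.NA x.2.2 • (↑μ⁻¹ : A)
    - D.TA (x.1 * x.2.1 * x.2.2) • (1 : A)

/-- The unit `1 = (1,0,0)` of `J(A,μ)`. -/
def Jone : A × A × A := ((1 : A), (0 : A), (0 : A))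

section Basics

variable {F A : Type*} [Field F] [Ring A] [Algebra F A] (D : DegreeThreeAlg F A)

lemma TA_add (x y : A) : D.TA (x + y) = D.TA x + D.TA y := by
  rw [D.TA_def, D.TA_def, D.TA_def, D.Ndir_add_right]

lemma TA_smul (c : F) (x : A) : D.TA (c • x) = c * D.TA x := by
  rw [D.TA_def, D.TA_def, D.Ndir_smul_right]

lemma TA_zero : D.TA 0 = 0 := by
  have := TA_smul D (0 : F) (0 : A); simpa using this

lemma TA_neg (x : A) : D.TA (-x) = -D.TA x := by
  have := TA_smul D (-1 : F) x; simpa using this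

lemma TA_sub (x y : A) : D.TA (x - y) = D.TA x - D.TA y := by
  rw [sub_eq_add_neg, TA_add, TA_neg, sub_eq_add_neg]

lemma NA_zero : D.NA 0 = 0 := by
  have := D.NA_smul (0 : F) (0 : A); simpa using this

lemma NA_neg (x : A) : D.NA (-x) = -D.NA x := by
  rw [show (-x) = (-1 : F) • x from (neg_one_smul F x).symm, D.NA_smul]; ring

lemma Ndir_zero_right (x : A) : D.Ndir x 0 = 0 := by
  have := D.Ndir_smul_right x (0 : F) (0 : A); simpa using this

lemma Ndir_neg_right (x y : A) : D.Ndir x (-y) = -D.Ndir x y := by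
  have := D.Ndir_smul_right x (-1 : F) y; simpa using this

lemma Ndir_zero_left (y : A) : D.Ndir 0 y = 0 := by
  have h := D.Ndir_expand 0 y 1
  simp only [one_smul, zero_add, one_pow, one_mul, NA_zero, Ndir_zero_right] at h
  linear_combination -h

lemma NA_add (x y : A) : D.NA (x + y) = D.NA x + D.Ndir x y + D.Ndir y x + D.NA y := by
  have h := D.Ndir_expand x y 1
  simpa using h

lemma NA_sub (x y : A) : D.NA (x - y) = D.NA x - D.Ndir x y + D.Ndir y x - D.NA y := by
  have h := D.Ndir_expand x y (-1)
  rw [neg_one_smul, ← sub_eq_add_neg] at h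
  rw [h]; ring

lemma Ndir_neg_left (x y : A) : D.Ndir (-x) y = D.Ndir x y := by
  have h1 := NA_add D (-x) y
  have h2 := NA_sub D y x
  rw [neg_add_eq_sub] at h1
  rw [NA_neg, Ndir_neg_right] at h1
  rw [h1] at h2
  linear_combination h2

lemma SA_neg (x : A) : D.SA (-x) = D.SA x := by
  rw [D.SA_def, D.SA_def, Ndir_neg_left]

lemma SA_zero : D.SA 0 = 0 := by rw [D.SA_def, Ndir_zero_left]

lemma Ndir_smul_left (c : F) (x y : A) : D.Ndir (c • x) y = c ^ 2 * D.Ndir x y := by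
  rcases eq_or_ne c 0 with rfl | hc
  · simp [Ndir_zero_left]
  · have key : c • x + y = c • (x + c⁻¹ • y) := by
      rw [smul_add, smul_smul, mul_inv_cancel₀ hc, one_smul]
    have h1 := D.Ndir_expand (c • x) y 1
    simp only [one_smul, one_pow, one_mul] at h1
    rw [key, D.NA_smul, D.Ndir_expand x y c⁻¹, D.NA_smul, D.Ndir_smul_right y c x] at h1
    have e2 : c * c⁻¹ = 1 := mul_inv_cancel₀ hc
    linear_combination (-1 : F) * h1 + (c^2 * D.Ndir x y + c*(c*c⁻¹+1)*D.Ndir y x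
      + ((c*c⁻¹)^2 + c*c⁻¹ + 1)*D.NA y) * e2

lemma SA_smul (c : F) (x : A) : D.SA (c • x) = c ^ 2 * D.SA x := by
  rw [D.SA_def, D.SA_def, Ndir_smul_left]

lemma TA_one (h2 : (2 : F) ≠ 0) : D.TA 1 = 3 := by
  have h := D.Ndir_expand 1 1 1
  have e1 : (1 : A) + (1 : F) • (1 : A) = (2 : F) • (1 : A) := by
    rw [one_smul, two_smul]
  rw [e1, D.NA_smul, D.NA_one] at h
  have h5 : (2 : F) * D.Ndir 1 1 = 2 * 3 := by linear_combination -h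
  have h4 := mul_left_cancel₀ h2 h5
  rw [D.TA_def, h4]

lemma SA_one (h2 : (2 : F) ≠ 0) : D.SA 1 = 3 := by
  rw [D.SA_def, ← D.TA_def, TA_one D h2]

end Basics

section Sharps

variable {F A : Type*} [Field F] [Ring A] [Algebra F A] (D : DegreeThreeAlg F A)

lemma Ndir_T (x y : A) : D.Ndir x y = D.TA (D.sharp x * y) := by
  rw [← D.trace_product, D.trace_sharp]

lemma T_sharp (x : A) : D.TA (D.sharp x) = D.SA x := by
  rw [D.SA_def, Ndir_T, mul_one]

lemma sharpBil_expand (x y : A) : sharpBil D x y =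
    x * y + y * x - D.TA x • y - D.TA y • x + (D.SA (x + y) - D.SA x - D.SA y) • (1 : A) := by
  unfold sharpBil
  rw [D.sharp_def, D.sharp_def, D.sharp_def, TA_add]
  rw [pow_two, pow_two, pow_two]
  simp only [mul_add, add_mul, add_smul, sub_smul, smul_sub, smul_add]
  module

lemma sigma_half (h2 : (2 : F) ≠ 0) (x y : A) :
    (2 : F) * (D.SA (x + y) - D.SA x - D.SA y)
      = 2 * D.TA x * D.TA y - D.TA (x * y) - D.TA (y * x) := by
  have e1 : D.TA (sharpBil D x y) = D.SA (x + y) - D.SA x - D.SA y := by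
    unfold sharpBil
    rw [TA_sub, TA_sub, T_sharp, T_sharp, T_sharp]
  have e2 : D.TA (sharpBil D x y) = D.TA (x * y) + D.TA (y * x) - D.TA x * D.TA y
      - D.TA y * D.TA x + (D.SA (x + y) - D.SA x - D.SA y) * 3 := by
    rw [sharpBil_expand]
    rw [TA_add, TA_sub, TA_sub, TA_add, TA_smul, TA_smul, TA_smul, TA_one D h2]
  linear_combination e1 - e2

lemma sharpBil_one (h2 : (2 : F) ≠ 0) (y : A) :
    sharpBil D 1 y = -y + D.TA y • (1 : A) := by
  have hs : (2 : F) * (D.SA (1 + y) - D.SA 1 - D.SA y) = (2 : F) * (2 * D.TA y) := by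
    have := sigma_half D h2 1 y
    rw [TA_one D h2, one_mul, mul_one] at this
    linear_combination this
  have hs2 := mul_left_cancel₀ h2 hs
  rw [sharpBil_expand, hs2, TA_one D h2, one_mul, mul_one]
  module

lemma T_comm (h2 : (2 : F) ≠ 0) (x y : A) : D.TA (x * y) = D.TA (y * x) := by
  have h1 : D.Ndir (1 + y) x - D.Ndir 1 x - D.Ndir y x
      = -D.TA (y * x) + D.TA y * D.TA x := by
    rw [Ndir_T, Ndir_T, Ndir_T]
    have hh : D.sharp (1 + y) * x - D.sharp 1 * x - D.sharp y * x = sharpBil D 1 y * x := by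
      unfold sharpBil; rw [sub_mul, sub_mul]
    rw [show D.TA (D.sharp (1 + y) * x) - D.TA (D.sharp 1 * x) - D.TA (D.sharp y * x)
        = D.TA (sharpBil D 1 y * x) by rw [← TA_sub, ← TA_sub, hh]]
    rw [sharpBil_one D h2, add_mul, neg_mul, smul_mul_assoc, one_mul, TA_add, TA_neg, TA_smul]
  have h4 := D.Tbil_def x y
  rw [D.trace_product, h1] at h4
  linear_combination h4

lemma SA_add (h2 : (2 : F) ≠ 0) (x y : A) :
    D.SA (x + y) = D.SA x + D.SA y + D.TA x * D.TA y - D.TA (x * y) := by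
  have h := sigma_half D h2 x y
  rw [← T_comm D h2 x y] at h
  have h5 : (2:F) * D.SA (x+y) = 2 * (D.SA x + D.SA y + D.TA x * D.TA y - D.TA (x * y)) := by
    linear_combination h
  exact mul_left_cancel₀ h2 h5

lemma SA_sub (h2 : (2 : F) ≠ 0) (x y : A) :
    D.SA (x - y) = D.SA x + D.SA y - D.TA x * D.TA y + D.TA (x * y) := by
  rw [sub_eq_add_neg, SA_add D h2, SA_neg, TA_neg, mul_neg, mul_neg, TA_neg]
  ring

lemma SA_sq (h2 : (2 : F) ≠ 0) (x : A) :
    (2 : F) * D.SA x = D.TA x * D.TA x - D.TA (x * x) := by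
  have h := SA_add D h2 x x
  rw [show x + x = (2:F) • x from (two_smul F x).symm, SA_smul] at h
  linear_combination h

lemma sharp_mul_self (x : A) : D.sharp x * x = D.NA x • (1 : A) := by
  have h := D.degree3 x
  rw [sub_eq_zero] at h
  rw [D.sharp_def, ← h]
  simp only [sub_mul, add_mul, smul_mul_assoc, one_mul, pow_succ, pow_zero, mul_assoc]
  try module

lemma mul_self_sharp (x : A) : x * D.sharp x = D.NA x • (1 : A) := by
  have h := D.degree3 x
  rw [sub_eq_zero] at h
  rw [D.sharp_def, ← h]
  simp only [mul_sub, mul_add, mul_smul_comm, mul_one, pow_succ, pow_zero, one_mul, mul_assoc]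
  try module

lemma sharp_smul (c : F) (x : A) : D.sharp (c • x) = (c * c) • D.sharp x := by
  rw [D.sharp_def, D.sharp_def, TA_smul, SA_smul]
  simp only [pow_two, smul_mul_assoc, mul_smul_comm, smul_smul, smul_sub, smul_add]
  match_scalars <;> ring

lemma sharp_neg (x : A) : D.sharp (-x) = D.sharp x := by
  rw [show (-x) = (-1 : F) • x from (neg_one_smul F x).symm, sharp_smul]
  norm_num

lemma sharp_zero : D.sharp 0 = 0 := by
  rw [D.sharp_def, SA_zero, TA_zero]; simp

lemma sharp_one (h2 : (2 : F) ≠ 0) : D.sharp 1 = 1 := by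
  rw [D.sharp_def, SA_one D h2, TA_one D h2, one_pow]
  module

lemma sharpBil_eq (h2 : (2 : F) ≠ 0) (x y : A) : sharpBil D x y =
    x * y + y * x - D.TA x • y - D.TA y • x + (D.TA x * D.TA y - D.TA (x * y)) • (1 : A) := by
  rw [sharpBil_expand, SA_add D h2]
  match_scalars <;> ring

lemma sharpBil_smul_left (h2 : (2 : F) ≠ 0) (c : F) (x y : A) :
    sharpBil D (c • x) y = c • sharpBil D x y := by
  rw [sharpBil_eq D h2 (c • x) y, sharpBil_eq D h2 x y, TA_smul, smul_mul_assoc,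
    mul_smul_comm, TA_smul]
  simp only [smul_add, smul_sub, smul_smul]
  match_scalars <;> ring

lemma sharpBil_neg_right (h2 : (2 : F) ≠ 0) (x y : A) :
    sharpBil D x (-y) = -sharpBil D x y := by
  rw [sharpBil_eq D h2 x (-y), sharpBil_eq D h2 x y]
  simp only [mul_neg, neg_mul, TA_neg, neg_smul, smul_neg]
  match_scalars <;> ring

lemma sharp_sub (h2 : (2 : F) ≠ 0) (x y : A) :
    D.sharp (x - y) = D.sharp x - sharpBil D x y + D.sharp y := by
  have h := sharpBil_neg_right D h2 x y
  unfold sharpBil at h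
  rw [← sub_eq_add_neg, sharp_neg] at h
  have h' : D.sharp (x - y) = -(D.sharp (x + y) - D.sharp x - D.sharp y)
      + D.sharp x + D.sharp y := by rw [← h]; abel
  rw [h']; unfold sharpBil; abel

end Sharps

section LinCH

variable {F A : Type*} [Field F] [Ring A] [Algebra F A] (D : DegreeThreeAlg F A)

lemma Ndir_expand_T (x y : A) :
    D.Ndir x y = D.TA (x * (x * y)) - D.TA x * D.TA (x * y) + D.SA x * D.TA y := by
  rw [Ndir_T, D.sharp_def, add_mul, sub_mul, smul_mul_assoc, smul_mul_assoc, one_mul,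
    TA_add, TA_sub, TA_smul, TA_smul, pow_two, mul_assoc]

lemma linCH2 (h2 : (2 : F) ≠ 0) (x y : A) :
    (2:F) • (x*(x*y)) + (2:F) • (x*(y*x)) + (2:F) • (y*(x*x))
    = (2*D.TA x) • (x*y) + (2*D.TA x) • (y*x) + (2*D.TA y) • (x*x)
      - ((2:F)*D.SA x) • y - (2*(D.TA x * D.TA y - D.TA (x*y))) • x
      + (2*D.TA (x*(x*y)) - 2*D.TA x*D.TA (x*y) + 2*D.SA x*D.TA y) • (1:A) := by
  have hp := D.degree3 (x + y)
  have hm := D.degree3 (x - y)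
  have hy := D.degree3 y
  have key : ((2:F) • (x*(x*y)) + (2:F) • (x*(y*x)) + (2:F) • (y*(x*x)))
      - ((2*D.TA x) • (x*y) + (2*D.TA x) • (y*x) + (2*D.TA y) • (x*x)
        - ((2:F)*D.SA x) • y - (2*(D.TA x * D.TA y - D.TA (x*y))) • x
        + (2*D.TA (x*(x*y)) - 2*D.TA x*D.TA (x*y) + 2*D.SA x*D.TA y) • (1:A))
      = ((x+y) ^ 3 - D.TA (x+y) • (x+y) ^ 2 + D.SA (x+y) • (x+y) - D.NA (x+y) • (1 : A))
        - ((x-y) ^ 3 - D.TA (x-y) • (x-y) ^ 2 + D.SA (x-y) • (x-y) - D.NA (x-y) • (1 : A))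
        - (2:F) • (y ^ 3 - D.TA y • y ^ 2 + D.SA y • y - D.NA y • (1 : A)) := by
    rw [TA_add, TA_sub, SA_add D h2, SA_sub D h2,
      NA_add, NA_sub, Ndir_expand_T D x y, Ndir_expand_T D y x]
    simp only [pow_succ, pow_zero, one_mul, mul_add, add_mul, mul_sub, sub_mul,
      smul_add, smul_sub, add_smul, sub_smul, smul_smul, mul_smul_comm, smul_mul_assoc,
      mul_one, mul_assoc]
    match_scalars <;> ring
  rw [hp, hm, hy] at key
  simp only [smul_zero, sub_zero, zero_sub, neg_zero, add_zero] at key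
  linear_combination (norm := module) key

end LinCH

section E1E2

variable {F A : Type*} [Field F] [Ring A] [Algebra F A] (D : DegreeThreeAlg F A)

lemma sharpBil_sharp (h2 : (2 : F) ≠ 0) (x w : A) :
    sharpBil D (D.sharp x) w = D.TA (x * w) • x - x * (w * x) := by
  have h := linCH2 D h2 x w
  have hts : D.TA (D.sharp x * w)
      = D.TA (x*(x*w)) - D.TA x * D.TA (x*w) + D.SA x * D.TA w := by
    rw [← Ndir_T, Ndir_expand_T]
  have key : (2:F) • (sharpBil D (D.sharp x) w) = (2:F) • (D.TA (x*w) • x - x*(w*x)) := by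
    rw [sharpBil_eq D h2, T_sharp, hts, D.sharp_def x]
    simp only [pow_two, sub_mul, add_mul, mul_sub, mul_add, smul_mul_assoc, mul_smul_comm,
      one_mul, mul_one, smul_add, smul_sub, smul_smul, mul_assoc]
    linear_combination (norm := module) h
  exact smul_right_injective A h2 key

lemma sharp_mul (h2 : (2 : F) ≠ 0) (u v : A) :
    D.sharp (u * v) = D.sharp v * D.sharp u := by
  have e_uv2 : D.TA (v*(u*v)) = D.TA (u*(v*v)) := by
    rw [T_comm D h2 v (u*v), mul_assoc]
  have e_u2v2 : D.TA (v*(u*(u*v))) = D.TA (u*(u*(v*v))) := by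
    rw [T_comm D h2 v (u*(u*v)), mul_assoc, mul_assoc]
  have h1 := linCH2 D h2 u v
  have h1v := congrArg (fun z => v * z) h1
  simp only [mul_add, mul_sub, mul_smul_comm, mul_assoc, mul_one, one_mul] at h1v
  have hb := linCH2 D h2 u (v*v)
  have hc := linCH2 D h2 (u+v) (u*v)
  rw [TA_add, SA_add D h2] at hc
  simp only [mul_add, add_mul, smul_add, add_smul, sub_smul, smul_sub, smul_smul,
    TA_add, mul_assoc] at hc
  rw [e_uv2, e_u2v2] at hc
  have hd := linCH2 D h2 u (u*v)
  have he := linCH2 D h2 v (u*v)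
  rw [e_uv2] at he
  simp only [mul_assoc] at hb hd he
  have hsq4 : (4:F) * D.SA (u*v)
      = 2*(D.TA (u*v) * D.TA (u*v) - D.TA (u*(v*(u*v)))) := by
    have hs := SA_sq D h2 (u*v)
    rw [show (u*v)*(u*v) = u*(v*(u*v)) from mul_assoc u v (u*v)] at hs
    linear_combination 2*hs
  have hvv : D.TA (v*v) = D.TA v * D.TA v - 2 * D.SA v := by
    linear_combination SA_sq D h2 v
  rw [hvv] at hb
  have h4 : (4:F) ≠ 0 := by
    have := mul_ne_zero h2 h2
    norm_num at this ⊢; exact this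
  have key : (4:F) • (D.sharp (u*v)) = (4:F) • (D.sharp v * D.sharp u) := by
    rw [D.sharp_def (u*v), D.sharp_def v, D.sharp_def u]
    simp only [pow_two, sub_mul, add_mul, mul_sub, mul_add, smul_mul_assoc, mul_smul_comm,
      one_mul, mul_one, smul_add, smul_sub, smul_smul, mul_assoc]
    linear_combination (norm := module)
      D.TA v • h1 - h1v - hb + hc - hd - he + hsq4 • (1:A)
  exact smul_right_injective A h4 key

end E1E2

section Extra

variable {F A : Type*} [Field F] [Ring A] [Algebra F A] (D : DegreeThreeAlg F A)

lemma sharp_mul_cancel (x y : A) : D.sharp x * (x * y) = D.NA x • y := by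
  rw [← mul_assoc, sharp_mul_self, smul_mul_assoc, one_mul]

end Extra

/-- For a central simple `A` of degree three and `μ ∈ A^×`, the adjoint identity
`(x^♯)^♯ = N(x)x` holds for all `x ∈ J(A,μ)` iff `μ ∈ F^×·1`. -/
theorem Jadjoint_identity_iff_scalar (F A : Type*) [Field F] [Ring A] [Algebra F A]
    (h2 : (2 : F) ≠ 0) (h3 : (3 : F) ≠ 0) (D : DegreeThreeAlg F A) (μ : Aˣ)
    (hcenter : ∀ a : A, (∀ b : A, a * b = b * a) → ∃ c : F, a = c • (1 : A))
    (hadjA : ∀ y : A, D.sharp (D.sharp y) = D.NA y • y) :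
    (∀ x : A × A × A,
        Jsharp D μ (Jsharp D μ x) =
          (JN D μ x * x.1, JN D μ x * x.2.1, JN D μ x * x.2.2)) ↔
      ∃ c : F, c ≠ 0 ∧ (↑μ : A) = c • (1 : A) := by
  constructor
  · intro H
    by_cases htriv : (1 : A) = 0
    · refine ⟨1, one_ne_zero, ?_⟩
      have hz : ∀ z : A, z = 0 := fun z => by
        calc z = z * 1 := (mul_one z).symm
          _ = 0 := by rw [htriv, mul_zero]
      rw [hz (↑μ : A), one_smul, htriv]
    · have comm : ∀ y : A, (↑μ : A) * D.sharp y = D.sharp y * ↑μ := by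
        intro y
        have h0 := congrArg Prod.fst (H ((0 : A), (1 : A), y))
        simp only [Jsharp, JN] at h0
        rw [sharp_zero, sharp_one D h2] at h0
        simp only [one_mul, mul_one, zero_mul, mul_zero, zero_sub, sub_zero] at h0
        rw [sharp_neg] at h0
        have e : D.sharp y = ↑μ⁻¹ * D.sharp y * ↑μ := by
          have := sub_eq_zero.mp h0; exact this
        calc (↑μ : A) * D.sharp y = ↑μ * (↑μ⁻¹ * D.sharp y * ↑μ) := by rw [← e]
          _ = (↑μ * ↑μ⁻¹) * (D.sharp y * ↑μ) := by
              rw [mul_assoc, mul_assoc]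
          _ = D.sharp y * ↑μ := by rw [μ.mul_inv, one_mul]
      have commAll : ∀ a : A, (↑μ : A) * a = a * ↑μ := by
        intro a
        have ha : a = D.TA a • (1 : A) - (D.sharp (1 + a) - D.sharp 1 - D.sharp a) := by
          have hb := sharpBil_one D h2 a
          unfold sharpBil at hb
          linear_combination (norm := module) hb
        rw [ha]
        simp only [mul_sub, sub_mul, mul_smul_comm, smul_mul_assoc, mul_one, one_mul]
        rw [comm (1 + a), comm 1, comm a]
      obtain ⟨c, hcmu⟩ := hcenter ↑μ commAll
      refine ⟨c, ?_, hcmu⟩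
      rintro rfl
      rw [zero_smul] at hcmu
      have h1 : (↑μ⁻¹ : A) * ↑μ = 1 := μ.inv_mul
      rw [hcmu, mul_zero] at h1
      exact htriv h1.symm
  · rintro ⟨c, hc0, hc⟩
    have hcinv : (↑μ⁻¹ : A) = c⁻¹ • (1 : A) := by
      have h1 : (↑μ : A) * (c⁻¹ • (1 : A)) = 1 := by
        rw [hc, smul_mul_assoc, mul_smul_comm, mul_one, smul_smul,
          mul_inv_cancel₀ hc0, one_smul]
      calc (↑μ⁻¹ : A) = ↑μ⁻¹ * (↑μ * (c⁻¹ • (1 : A))) := by rw [h1, mul_one]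
        _ = (↑μ⁻¹ * ↑μ) * (c⁻¹ • (1 : A)) := by rw [mul_assoc]
        _ = c⁻¹ • (1 : A) := by rw [μ.inv_mul, one_mul]
    intro x
    obtain ⟨a, b, d⟩ := x
    have tcyc1 : D.TA (b * (d * a)) = D.TA (a * (b * d)) := by
      rw [T_comm D h2 b (d * a), mul_assoc, T_comm D h2 d (a * b), mul_assoc]
    have tcyc2 : D.TA (d * (a * b)) = D.TA (a * (b * d)) := by
      rw [T_comm D h2 d (a * b), mul_assoc]
    simp only [Jsharp, JN, Prod.mk.injEq]
    rw [hc, hcinv]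
    simp only [smul_mul_assoc, one_mul]
    refine ⟨?_, ?_, ?_⟩
    · -- component 0
      rw [sharp_sub D h2 (D.sharp a) (b * d), sharpBil_sharp D h2 a (b * d),
        hadjA a, sharp_mul D h2 b d]
      simp only [sub_mul, mul_sub, add_mul, smul_mul_assoc, mul_smul_comm, one_mul,
        mul_one, smul_smul, smul_sub, smul_add, sub_smul, add_smul, mul_assoc]
      rw [sharp_mul_cancel D d a, mul_self_sharp D b]
      simp only [mul_smul_comm, mul_one, smul_smul, mul_assoc]
      match_scalars <;> first
        | ring1
        | (field_simp; try ring1)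
    · -- component 1
      rw [sharp_sub D h2 (c • D.sharp b) (d * a), sharp_smul, hadjA b,
        sharpBil_smul_left D h2, sharpBil_sharp D h2 b (d * a),
        sharp_mul D h2 d a, tcyc1]
      simp only [sub_mul, mul_sub, add_mul, smul_mul_assoc, mul_smul_comm, one_mul,
        mul_one, smul_smul, smul_sub, smul_add, sub_smul, add_smul, mul_assoc]
      rw [sharp_mul_cancel D a b, mul_self_sharp D d]
      simp only [mul_smul_comm, mul_one, smul_smul, mul_assoc]
      match_scalars <;> first
        | ring1
        | (field_simp; try ring1)
    · -- component 2
      rw [sharp_sub D h2 (c⁻¹ • D.sharp d) (a * b), sharp_smul, hadjA d,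
        sharpBil_smul_left D h2, sharpBil_sharp D h2 d (a * b),
        sharp_mul D h2 a b, tcyc2]
      simp only [sub_mul, mul_sub, add_mul, smul_mul_assoc, mul_smul_comm, one_mul,
        mul_one, smul_smul, smul_sub, smul_add, sub_smul, add_smul, mul_assoc]
      rw [sharp_mul_cancel D b d, mul_self_sharp D a]
      simp only [mul_smul_comm, mul_one, smul_smul, mul_assoc]
      match_scalars <;> first
        | ring1
        | (field_simp; try ring1)
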